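/- Let k ≥ 2 and let Θ_i : E_i → E_{i+1} (i = 1, …, k) be contractions between complex Hilbert spaces, Θ := Θ_k ⋯ Θ_1. Then Θ = Θ_k ⋯ Θ_1 is a k-regular factorization if and only if the two-factor factorization Θ = Θ_k · (Θ_{k-1} ⋯ Θ_1) is 2-regular and the factorization Θ_{k-1} ⋯ Θ_1 (of the contraction Θ_{k-1}⋯Θ_1) is (k−1)-regular. -/

import Mathlib

noncomputable section
open ContinuousLinearMap

section Defect
variable {H K : Type*} [NormedAddCommGroup H] [InnerProductSpace ℂ H] [CompleteSpace H]
  [NormedAddCommGroup K] [InnerProductSpace ℂ K] [CompleteSpace K]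

/-- The defect operator `Δ_A := (I - A*A)^{1/2}` of a contraction `A : H → K`. -/
noncomputable def defect (A : H →L[ℂ] K) : H →L[ℂ] H :=
  CFC.sqrt (1 - (ContinuousLinearMap.adjoint A).comp A)

/-- Closure of the range of an operator, as a submodule. -/
noncomputable def clRan (A : H →L[ℂ] K) : Submodule ℂ K :=
  (LinearMap.range (A : H →ₗ[ℂ] K)).topologicalClosure

theorem defect_mem_clRan (A : H →L[ℂ] K) (x : H) : defect A x ∈ clRan (defect A) :=
  Submodule.le_topologicalClosure _ (LinearMap.mem_range_self (defect A : H →ₗ[ℂ] H) x)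

instance clRan_completeSpace (A : H →L[ℂ] K) : CompleteSpace (clRan A) :=
  (Submodule.isClosed_topologicalClosure _).completeSpace_coe
end Defect
section Chain
variable {E : ℕ → Type*} [∀ n, NormedAddCommGroup (E n)] [∀ n, InnerProductSpace ℂ (E n)]
  [∀ n, CompleteSpace (E n)]

/-- Transport along an equality of indices. -/
def castCLM {a b : ℕ} (h : a = b) : E a →L[ℂ] E b := by
  subst h; exact ContinuousLinearMap.id ℂ (E a)

/-- `segProd Θ a m = Θ_{a+m} ∘ ⋯ ∘ Θ_{a+1} : E a → E (a+m)` (in `1`-based notation):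
the composition of `m` successive operators of the chain starting at index `a`. -/
noncomputable def segProd (Θ : ∀ n, E n →L[ℂ] E (n + 1)) (a : ℕ) :
    ∀ m : ℕ, E a →L[ℂ] E (a + m)
  | 0 => ContinuousLinearMap.id ℂ (E a)
  | m + 1 => (Θ (a + m)).comp (segProd Θ a m)

/-- `chainProd Θ a b : E a → E b` is the composition of the operators of the chain
leading from `E a` to `E b` (for `a ≤ b`; junk value `0` otherwise). -/
noncomputable def chainProd (Θ : ∀ n, E n →L[ℂ] E (n + 1)) (a b : ℕ) : E a →L[ℂ] E b :=
  if h : a ≤ b then (castCLM (Nat.add_sub_cancel' h)).comp (segProd Θ a (b - a)) else 0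

/-- The tuple `(Δ_k Θ_{k-1}⋯Θ_1 f, …, Δ_2 Θ_1 f, Δ_1 f)` (component `i : Fin k`
corresponds to the `(i+1)`-st factor, in `1`-based notation) in the Hilbert (ℓ²)
direct sum of the closures of the ranges of the defect operators of the factors. -/
noncomputable def regTuple (Θ : ∀ n, E n →L[ℂ] E (n + 1)) (k : ℕ) (f : E 0) :
    PiLp 2 (fun i : Fin k => clRan (defect (Θ (i : ℕ)))) :=
  WithLp.toLp 2 (fun i => ⟨defect (Θ (i : ℕ)) (chainProd Θ 0 (i : ℕ) f), defect_mem_clRan _ _⟩)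

/-- `k`-regularity of the factorization `Θ_k ⋯ Θ_1`: the set
`{Δ_k Θ_{k-1}⋯Θ_1 f ⊕ ⋯ ⊕ Δ_2 Θ_1 f ⊕ Δ_1 f : f ∈ E_1}` is dense in the Hilbert
direct sum `(cl ran Δ_k) ⊕ ⋯ ⊕ (cl ran Δ_1)`. -/
def IsRegularFact (Θ : ∀ n, E n →L[ℂ] E (n + 1)) (k : ℕ) : Prop :=
  DenseRange (regTuple Θ k)

end Chain
section TwoRegular
variable {H F K : Type*} [NormedAddCommGroup H] [InnerProductSpace ℂ H] [CompleteSpace H]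
  [NormedAddCommGroup F] [InnerProductSpace ℂ F] [CompleteSpace F]
  [NormedAddCommGroup K] [InnerProductSpace ℂ K] [CompleteSpace K]

/-- `2`-regularity of the factorization `A = A₂ A₁`: density of
`{Δ_{A₂} A₁ h ⊕ Δ_{A₁} h : h ∈ H}` in the Hilbert direct sum
`(cl ran Δ_{A₂}) ⊕₂ (cl ran Δ_{A₁})`. -/
def IsTwoRegular (A₁ : H →L[ℂ] F) (A₂ : F →L[ℂ] K) : Prop :=
  DenseRange (fun h : H =>
    ((WithLp.equiv 2 (clRan (defect A₂) × clRan (defect A₁))).symm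
      (⟨defect A₂ (A₁ h), defect_mem_clRan _ _⟩, ⟨defect A₁ h, defect_mem_clRan _ _⟩)))

end TwoRegular

/-!
Write `Θ' = Θ_{k-1}⋯Θ_1`. Splitting off the last coordinate, `k`-regularity is density of
`f ↦ (Δ_k Θ' f, T f)`, where `T f` is the `(k-1)`-tuple of `f`, while `2`-regularity of
`Θ_k · Θ'` is density of `f ↦ (Δ_k Θ' f, Δ_{Θ'} f)`. By the norm identity
`‖Δ_{Θ'} f‖² = ∑_{m=1}^{k-1} ‖Δ_m Θ_{m-1}⋯Θ_1 f‖²` the linear maps `T` and `Δ_{Θ'}` are isometric to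
each other, and `Δ_{Θ'}` has dense range in `cl ran Δ_{Θ'}`; so in either density statement the
second coordinate `T` can be exchanged for `Δ_{Θ'}`, at the price of also requiring `T` alone to
have dense range, which is `(k-1)`-regularity.
-/

section Density

theorem Homeomorph.denseRange_comp_iff {X Y Z : Type*} [TopologicalSpace X] [TopologicalSpace Y]
    (e : X ≃ₜ Y) {f : Z → X} : DenseRange (e ∘ f) ↔ DenseRange f := by
  rw [DenseRange, Set.range_comp, e.isDenseEmbedding.dense_image]
  rfl

variable {Z A B C : Type*} [PseudoMetricSpace A] [PseudoMetricSpace B] [PseudoMetricSpace C]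
  {u : Z → A} {v : Z → B} {w : Z → C}

theorem DenseRange.prodMk_of_dist_le (huv : DenseRange fun z => (u z, v z)) (hw : DenseRange w)
    (hwv : ∀ z z', dist (w z) (w z') ≤ dist (v z) (v z')) :
    DenseRange fun z => (u z, w z) := by
  refine Metric.denseRange_iff.2 fun ⟨a, c⟩ ε hε => ?_
  obtain ⟨z₀, hz₀⟩ := Metric.denseRange_iff.1 hw c (ε / 2) (half_pos hε)
  obtain ⟨z, hz⟩ := Metric.denseRange_iff.1 huv (a, v z₀) (ε / 2) (half_pos hε)
  rw [Prod.dist_eq, max_lt_iff] at hz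
  refine ⟨z, ?_⟩
  rw [Prod.dist_eq, max_lt_iff]
  refine ⟨hz.1.trans (half_lt_self hε), ?_⟩
  calc dist c (w z) ≤ dist c (w z₀) + dist (w z₀) (w z) := dist_triangle _ _ _
    _ ≤ dist c (w z₀) + dist (v z₀) (v z) := by gcongr; exact hwv _ _
    _ < ε / 2 + ε / 2 := add_lt_add hz₀ hz.2
    _ = ε := add_halves ε

theorem denseRange_prodMk_iff_of_dist_eq [Nonempty A] (hv : DenseRange v)
    (hvw : ∀ z z', dist (v z) (v z') = dist (w z) (w z')) :
    DenseRange (fun z => (u z, w z)) ↔ DenseRange (fun z => (u z, v z)) ∧ DenseRange w := by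
  refine ⟨fun huw => ⟨huw.prodMk_of_dist_le hv fun z z' => (hvw z z').le, ?_⟩,
    fun ⟨huv, hw⟩ => huv.prodMk_of_dist_le hw fun z z' => (hvw z z').ge⟩
  exact Prod.snd_surjective.denseRange.comp huw continuous_snd

end Density

section LastInit

variable {m : ℕ} (G : Fin (m + 1) → Type*) [∀ i, TopologicalSpace (G i)]

def Homeomorph.piLastInit : (∀ i, G i) ≃ₜ G (Fin.last m) × ∀ i : Fin m, G i.castSucc where
  toEquiv := (Fin.snocEquiv G).symm
  continuous_toFun := (continuous_apply _).prodMk (continuous_pi fun _ => continuous_apply _)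
  continuous_invFun := continuous_snd.finSnoc continuous_fst

def PiLp.lastInitHomeomorph (p : ENNReal) :
    PiLp p G ≃ₜ G (Fin.last m) × PiLp p (fun i : Fin m => G i.castSucc) :=
  (PiLp.homeomorph p G).trans <| (Homeomorph.piLastInit G).trans <|
    (Homeomorph.refl _).prodCongr (PiLp.homeomorph p _).symm

end LastInit

section Defect

open scoped InnerProductSpace

variable {H K : Type*} [NormedAddCommGroup H] [InnerProductSpace ℂ H] [CompleteSpace H]
  [NormedAddCommGroup K] [InnerProductSpace ℂ K] [CompleteSpace K]

theorem re_inner_one_sub_adjoint_comp_self_apply (A : H →L[ℂ] K) (x : H) :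
    RCLike.re ⟪(1 - adjoint A ∘L A) x, x⟫_ℂ = ‖x‖ ^ 2 - ‖A x‖ ^ 2 := by
  rw [sub_apply, inner_sub_left, map_sub, apply_norm_sq_eq_inner_adjoint_left, one_apply_eq_self,
    inner_self_eq_norm_sq]

theorem isPositive_one_sub_adjoint_comp_self {A : H →L[ℂ] K} (hA : ‖A‖ ≤ 1) :
    (1 - adjoint A ∘L A).IsPositive := by
  refine isPositive_def'.2
    ⟨.sub (.one _) (isPositive_adjoint_comp_self A).isSelfAdjoint, fun x => ?_⟩
  rw [reApplyInnerSelf_apply, re_inner_one_sub_adjoint_comp_self_apply, sub_nonneg]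
  gcongr
  simpa using A.le_of_opNorm_le hA x

theorem norm_defect_apply_sq {A : H →L[ℂ] K} (hA : ‖A‖ ≤ 1) (x : H) :
    ‖defect A x‖ ^ 2 = ‖x‖ ^ 2 - ‖A x‖ ^ 2 := by
  have hsq : defect A * defect A = 1 - adjoint A ∘L A :=
    CFC.sqrt_mul_sqrt_self _ ((nonneg_iff_isPositive _).2 (isPositive_one_sub_adjoint_comp_self hA))
  have hsa : IsSelfAdjoint (defect A) := (CFC.sqrt_nonneg _).isSelfAdjoint
  rw [← re_inner_one_sub_adjoint_comp_self_apply, ← hsq, ← inner_self_eq_norm_sq (𝕜 := ℂ),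
    mul_apply_eq_comp]
  exact congrArg _ (hsa.isSymmetric _ _).symm

end Defect

section ClosedRange

variable {H K : Type*} [NormedAddCommGroup H] [InnerProductSpace ℂ H]
  [NormedAddCommGroup K] [InnerProductSpace ℂ K]

def clRanRestrict (T : H →L[ℂ] K) : H →L[ℂ] clRan T :=
  T.codRestrict _ fun x => Submodule.le_topologicalClosure _ (LinearMap.mem_range_self _ x)

theorem denseRange_clRanRestrict (T : H →L[ℂ] K) : DenseRange (clRanRestrict T) := by
  rw [DenseRange, Subtype.dense_iff, ← Set.range_comp]
  exact (Submodule.topologicalClosure_coe _).subset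

end ClosedRange

section Chain

variable {E : ℕ → Type*} [∀ n, NormedAddCommGroup (E n)] [∀ n, InnerProductSpace ℂ (E n)]
  (Θ : ∀ n, E n →L[ℂ] E (n + 1))

theorem castCLM_comp_segProd {a m m' : ℕ} (h : m' = m) (h' : a + m' = a + m) :
    (castCLM h').comp (segProd Θ a m') = segProd Θ a m := by
  subst h
  rfl

theorem chainProd_add (a m : ℕ) : chainProd Θ a (a + m) = segProd Θ a m := by
  rw [chainProd, dif_pos (Nat.le_add_right a m)]
  exact castCLM_comp_segProd Θ (Nat.add_sub_cancel_left a m) _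

theorem chainProd_succ {a b : ℕ} (h : a ≤ b) :
    chainProd Θ a (b + 1) = (Θ b).comp (chainProd Θ a b) := by
  obtain ⟨m, rfl⟩ := Nat.exists_eq_add_of_le h
  change chainProd Θ a (a + (m + 1)) = _
  rw [chainProd_add, chainProd_add]
  rfl

variable {Θ}

theorem norm_chainProd_le_one {n : ℕ} (hΘ : ∀ i < n, ‖Θ i‖ ≤ 1) : ‖chainProd Θ 0 n‖ ≤ 1 := by
  induction n with
  | zero => exact norm_id_le
  | succ n ih =>
    rw [chainProd_succ Θ n.zero_le]
    exact (opNorm_comp_le _ _).trans (mul_le_one₀ (hΘ n n.lt_succ_self) (norm_nonneg _)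
      (ih fun i hi => hΘ i (hi.trans n.lt_succ_self)))

variable [∀ n, CompleteSpace (E n)]

theorem sum_norm_defect_chainProd_sq {n : ℕ} (hΘ : ∀ i < n, ‖Θ i‖ ≤ 1) (f : E 0) :
    ∑ i : Fin n, ‖defect (Θ i) (chainProd Θ 0 i f)‖ ^ 2 = ‖f‖ ^ 2 - ‖chainProd Θ 0 n f‖ ^ 2 := by
  induction n with
  | zero => exact (sub_self _).symm
  | succ n ih =>
    simp only [Fin.sum_univ_castSucc, Fin.val_castSucc, Fin.val_last]
    rw [ih fun i hi => hΘ i (hi.trans n.lt_succ_self), norm_defect_apply_sq (hΘ n n.lt_succ_self),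
      chainProd_succ Θ n.zero_le, comp_apply]
    ring

theorem norm_regTuple {n : ℕ} (hΘ : ∀ i < n, ‖Θ i‖ ≤ 1) (f : E 0) :
    ‖regTuple Θ n f‖ = ‖defect (chainProd Θ 0 n) f‖ := by
  rw [← sq_eq_sq₀ (norm_nonneg _) (norm_nonneg _), PiLp.norm_sq_eq_of_L2,
    norm_defect_apply_sq (norm_chainProd_le_one hΘ), ← sum_norm_defect_chainProd_sq hΘ]
  rfl

theorem regTuple_sub (n : ℕ) (f g : E 0) :
    regTuple Θ n f - regTuple Θ n g = regTuple Θ n (f - g) := by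
  ext i
  simp [regTuple]

theorem dist_clRanRestrict_defect_chainProd {n : ℕ} (hΘ : ∀ i < n, ‖Θ i‖ ≤ 1) (f g : E 0) :
    dist (clRanRestrict (defect (chainProd Θ 0 n)) f) (clRanRestrict (defect (chainProd Θ 0 n)) g)
      = dist (regTuple Θ n f) (regTuple Θ n g) := by
  rw [dist_eq_norm, dist_eq_norm, ← map_sub, regTuple_sub, norm_regTuple hΘ]
  rfl

end Chain

/-- `Θ = Θ_k ⋯ Θ_1` is `k`-regular iff `Θ = Θ_k · (Θ_{k-1}⋯Θ_1)` is
`2`-regular and `Θ_{k-1}⋯Θ_1` is `(k-1)`-regular. (Indices are `0`-based here.) -/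
theorem isRegularFact_iff_top_split {E : ℕ → Type*}
    [∀ n, NormedAddCommGroup (E n)] [∀ n, InnerProductSpace ℂ (E n)] [∀ n, CompleteSpace (E n)]
    (k : ℕ) (hk : 2 ≤ k) (Θ : ∀ n, E n →L[ℂ] E (n + 1)) (hΘ : ∀ i < k, ‖Θ i‖ ≤ 1) :
    IsRegularFact Θ k ↔
      (IsTwoRegular (chainProd Θ 0 (k - 1)) (Θ (k - 1)) ∧ IsRegularFact Θ (k - 1)) := by
  obtain ⟨m, rfl⟩ : ∃ m, k = m + 1 := ⟨k - 1, by omega⟩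
  let top : E 0 → clRan (defect (Θ m)) := clRanRestrict (defect (Θ m)) ∘ chainProd Θ 0 m
  have hsplit : IsRegularFact Θ (m + 1) ↔ DenseRange fun f => (top f, regTuple Θ m f) :=
    (PiLp.lastInitHomeomorph _ 2).denseRange_comp_iff.symm
  have htwo : IsTwoRegular (chainProd Θ 0 m) (Θ m) ↔
      DenseRange fun f => (top f, clRanRestrict (defect (chainProd Θ 0 m)) f) :=
    (WithLp.homeomorphProd 2 _ _).denseRange_comp_iff.symm
  rw [hsplit, Nat.add_sub_cancel, htwo]
  exact denseRange_prodMk_iff_of_dist_eq (denseRange_clRanRestrict _)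
    (dist_clRanRestrict_defect_chainProd fun i hi => hΘ i (hi.trans m.lt_succ_self))
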